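/- Conversely (Sarason's lemma), if ψ: A → B(K) is a unital representation, H ⊆ K is a closed subspace, and the compression map a ↦ P_H ψ(a)|_H is multiplicative (hence a representation of A on H), then H is semi-invariant for ψ: there exist closed ψ-invariant subspaces L ⊆ N ⊆ K with H = N ⊖ L. -/

import Mathlib

noncomputable section

/-- The compression of an operator `T ∈ B(K)` to a subspace `H`: `P_H T |_H ∈ B(H)`. -/
def compress {K : Type*} [NormedAddCommGroup K] [InnerProductSpace ℂ K]
    (H : Submodule ℂ K) [H.HasOrthogonalProjection] (T : K →L[ℂ] K) : H →L[ℂ] H :=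
  (H.orthogonalProjectionOnto) ∘L T ∘L H.subtypeL

/-- **Sarason's lemma.** If `ψ : A → B(K)` is a unital representation,
`H ⊆ K` is a closed subspace, and the compression `a ↦ P_H ψ(a)|_H` is multiplicative,
then `H` is semi-invariant for `ψ`: there exist closed `ψ`-invariant subspaces
`L ⊆ N ⊆ K` with `H = N ⊖ L`. -/
theorem semiInvariant_of_compression_multiplicative
    {A : Type*} [Ring A] [Algebra ℂ A]
    {K : Type*} [NormedAddCommGroup K] [InnerProductSpace ℂ K] [CompleteSpace K]
    (ψ : A →ₐ[ℂ] (K →L[ℂ] K))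
    (H : Submodule ℂ K) (hH : IsClosed (H : Set K)) [H.HasOrthogonalProjection]
    (hmult : ∀ a b : A, compress H (ψ (a * b)) = compress H (ψ a) * compress H (ψ b)) :
    ∃ L N : Submodule ℂ K, IsClosed (L : Set K) ∧ IsClosed (N : Set K) ∧ L ≤ N ∧
      (∀ a : A, ∀ x ∈ L, ψ a x ∈ L) ∧ (∀ a : A, ∀ x ∈ N, ψ a x ∈ N) ∧
      H = N ⊓ Lᗮ := by
  classical
  set S : Set K := {y | ∃ a : A, ∃ x ∈ H, y = ψ a x} with hS
  set N₀ : Submodule ℂ K := Submodule.span ℂ S with hN₀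
  set N : Submodule ℂ K := N₀.topologicalClosure with hN
  have hNclosed : IsClosed (N : Set K) := N₀.isClosed_topologicalClosure
  set L : Submodule ℂ K := N ⊓ Hᗮ with hL
  have hLclosed : IsClosed (L : Set K) :=
    hNclosed.inter H.isClosed_orthogonal
  -- H ≤ N
  have hHN : H ≤ N := by
    intro x hx
    have : x ∈ S := ⟨1, x, hx, by simp⟩
    exact Submodule.le_topologicalClosure _ (Submodule.subset_span this)
  -- N is invariant
  have hNinv : ∀ a : A, ∀ x ∈ N, ψ a x ∈ N := by
    intro a x hx
    have hmap : Submodule.map (ψ a).toLinearMap N₀ ≤ N₀ := by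
      rw [hN₀, Submodule.map_span, Submodule.span_le]
      rintro _ ⟨_, ⟨b, y, hy, rfl⟩, rfl⟩
      refine Submodule.subset_span ⟨a * b, y, hy, ?_⟩
      simp [map_mul]
    have hx' : x ∈ closure (N₀ : Set K) := hx
    have : ψ a x ∈ closure ((ψ a) '' (N₀ : Set K)) :=
      image_closure_subset_closure_image (ψ a).continuous ⟨x, hx', rfl⟩
    refine closure_mono ?_ this
    rintro _ ⟨w, hw, rfl⟩
    exact hmap ⟨w, hw, rfl⟩
  -- the key identity: for z ∈ N, P_H ψ(a) z = P_H ψ(a) P_H z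
  have key : ∀ a : A, ∀ z ∈ N,
      ((H.orthogonalProjectionOnto (ψ a z) : K))
        = ((H.orthogonalProjectionOnto (ψ a ((H.orthogonalProjectionOnto z : K))) : K)) := by
    intro a z hz
    set f : K →L[ℂ] K := H.subtypeL ∘L (H.orthogonalProjectionOnto) ∘L (ψ a) with hf
    set g : K →L[ℂ] K :=
      f ∘L (H.subtypeL ∘L (H.orthogonalProjectionOnto)) with hg
    have hker : N ≤ LinearMap.ker (f - g).toLinearMap := by
      apply Submodule.topologicalClosure_minimal
      · rw [hN₀, Submodule.span_le]
        rintro _ ⟨b, x, hx, rfl⟩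
        have hc := congrArg (fun T : H →L[ℂ] H => ((T ⟨x, hx⟩ : H) : K)) (hmult a b)
        simp only [compress, ContinuousLinearMap.mul_apply,
          ContinuousLinearMap.comp_apply, Submodule.subtypeL_apply] at hc
        have hab : ψ (a * b) x = ψ a (ψ b x) := by simp [map_mul]
        rw [hab] at hc
        simp only [SetLike.mem_coe, LinearMap.mem_ker, ContinuousLinearMap.coe_coe,
          ContinuousLinearMap.sub_apply, sub_eq_zero, hf, hg,
          ContinuousLinearMap.comp_apply, Submodule.subtypeL_apply]
        exact_mod_cast hc
      · exact ContinuousLinearMap.isClosed_ker (f - g)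
    have h0 := hker hz
    rw [LinearMap.mem_ker, ContinuousLinearMap.coe_coe, ContinuousLinearMap.sub_apply, sub_eq_zero] at h0
    simpa [hf, hg, ContinuousLinearMap.comp_apply, Submodule.subtypeL_apply] using h0
  -- L is invariant
  have hLinv : ∀ a : A, ∀ x ∈ L, ψ a x ∈ L := by
    intro a x hx
    rcases hx with ⟨hxN, hxO⟩
    refine ⟨hNinv a x hxN, ?_⟩
    have hPx : H.orthogonalProjectionOnto x = 0 :=
      Submodule.orthogonalProjectionOnto_eq_zero_iff.2 hxO
    have hk := key a x hxN
    rw [hPx] at hk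
    simp only [Submodule.coe_zero, map_zero] at hk
    show (ψ a) x ∈ Hᗮ
    rw [← Submodule.orthogonalProjectionOnto_eq_zero_iff]
    exact Subtype.ext hk
  refine ⟨L, N, hLclosed, hNclosed, inf_le_left, hLinv, hNinv, ?_⟩
  have hLH : L ≤ Hᗮ := inf_le_right
  apply le_antisymm
  · intro x hx
    refine ⟨hHN hx, ?_⟩
    exact Submodule.orthogonal_le hLH (Submodule.le_orthogonal_orthogonal H hx)
  · rintro x ⟨hxN, hxL⟩
    set h : K := (H.orthogonalProjectionOnto x : K) with hh
    have hhH : h ∈ H := (H.orthogonalProjectionOnto x).2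
    have hsub : x - h ∈ Hᗮ := H.sub_starProjection_mem_orthogonal x
    have hsubN : x - h ∈ N := N.sub_mem hxN (hHN hhH)
    have hsubL : x - h ∈ L := ⟨hsubN, hsub⟩
    have hhLperp : h ∈ Lᗮ :=
      Submodule.orthogonal_le hLH (Submodule.le_orthogonal_orthogonal H hhH)
    have hsubLperp : x - h ∈ Lᗮ := Lᗮ.sub_mem hxL hhLperp
    have hxh : x - h = 0 := by
      have h0 : (inner ℂ (x - h) (x - h) : ℂ) = 0 :=
        (Submodule.mem_orthogonal L (x - h)).1 hsubLperp (x - h) hsubL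
      exact inner_self_eq_zero.1 h0
    have : x = h := by rw [sub_eq_zero] at hxh; exact hxh
    rw [this]; exact hhH
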